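/- Let n be a positive integer. Consider partial transformations of the set {1,…,n+1} (equivalently, total maps on {1,…,n+1} ∪ {θ} fixing θ, where θ denotes 'undefined'), composed left to right. Let a be the partial transformation with a(i) = i+1 for 1 ≤ i ≤ n−1, a(n) = 1, and a undefined at n+1; let b be the partial transformation with b(n+1) = 1, b(i) = i+1 for 1 ≤ i ≤ n−1, and b undefined at n; for 1 ≤ i,j ≤ n+1 let e_{i,j} be the partial transformation with domain {i} sending i to j. Let N be the set consisting of the identity transformation, all elements of the subsemigroup generated by a and b, all the maps e_{i,j}, and the empty transformation; N is a subsemigroup of the partial transformation semigroup (the e_{i,j} together with the empty map form an ideal isomorphic to M⁰({1},n+1,n+1;I_{n+1})). Then N is Mal'cev nilpotent if and only if n is odd. -/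

import Mathlib

namespace SMN

variable {S : Type*}

/-- Mal'cev sequences `(λ_n, ρ_n)`; `z k` plays the role of `z_{k+1}`. -/
def lr [Mul S] (x y : S) (z : ℕ → S) : ℕ → S × S
  | 0 => (x, y)
  | n + 1 =>
    let p := lr x y z n
    (p.1 * z n * p.2, p.2 * z n * p.1)

/-- Cyclic shift by `k` in `Fin t`. -/
def cyc {t : ℕ} (i : Fin t) (k : ℕ) : Fin t :=
  ⟨(i.val + k) % t, Nat.mod_lt _ i.pos⟩

/-- Strong Mal'cev sequences `λ_{n,i}`; `z k` plays the role of `z_{k+1}`. -/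
def slam [Mul S] {t : ℕ} (x : Fin t → S) (z : ℕ → S) : ℕ → Fin t → S
  | 0 => x
  | n + 1 =>
    let f := slam x z n
    fun i => (List.range (t - 1)).foldl (fun acc j => acc * z n * f (cyc i (j + 1))) (f i)

/-- A semigroup is Mal'cev nilpotent if for some `n ≥ 1`,
`λ_n = ρ_n` for all `x, y ∈ S` and `z₁, …, z_n ∈ S¹`. -/
def MalcevNilpotent (S : Type*) [Semigroup S] : Prop :=
  ∃ n : ℕ, 1 ≤ n ∧ ∀ (x y : S) (z : ℕ → WithOne S),
    (lr (x : WithOne S) (y : WithOne S) z n).1 = (lr (x : WithOne S) (y : WithOne S) z n).2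

/-- Strong Mal'cev nilpotency at level `n`. -/
def SMNAt (S : Type*) [Semigroup S] (n : ℕ) : Prop :=
  ∀ t : ℕ, 2 ≤ t → ∀ (x : Fin t → S) (z : ℕ → WithOne S) (i j : Fin t),
    slam (fun k => (x k : WithOne S)) z n i = slam (fun k => (x k : WithOne S)) z n j

/-- A semigroup is strongly Mal'cev nilpotent if for some `n ≥ 1`, for every `t ≥ 2`,
`λ_{n,1} = ⋯ = λ_{n,t}` for all `x₁, …, x_t ∈ S` and `z₁, …, z_n ∈ S¹`. -/
def StronglyMalcevNilpotent (S : Type*) [Semigroup S] : Prop :=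
  ∃ n : ℕ, 1 ≤ n ∧ SMNAt S n

/-- `y` is an inverse of `x`. -/
def IsInverseOf [Semigroup S] (y x : S) : Prop := x * y * x = x ∧ y * x * y = y

/-- A block group: every element has at most one inverse. -/
def BlockGroup (S : Type*) [Semigroup S] : Prop :=
  ∀ x y₁ y₂ : S, IsInverseOf y₁ x → IsInverseOf y₂ x → y₁ = y₂

/-- All subgroups (subsemigroups which are groups) of `S` are nilpotent. -/
def AllSubgroupsNilpotent (S : Type*) [Semigroup S] : Prop :=
  ∀ (G : Type) [Group G], ∀ φ : G → S,
    (∀ a b : G, φ (a * b) = φ a * φ b) → Function.Injective φ → Group.IsNilpotent G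

/-- All subgroups (subsemigroups which are groups) of `S` are trivial. -/
def AllSubgroupsTrivial (S : Type*) [Semigroup S] : Prop :=
  ∀ (G : Type) [Group G], ∀ φ : G → S,
    (∀ a b : G, φ (a * b) = φ a * φ b) → Function.Injective φ → ∀ g : G, g = 1

end SMN

namespace SMN


/-- Partial transformations of `Ω`, composed left to right
(`f * g` means: first `f`, then `g`; `none` plays the role of `θ`). -/
def PT (Ω : Type*) := Ω → Option Ω

instance (Ω : Type*) : Mul (PT Ω) := ⟨fun f g x => (f x).bind g⟩

instance (Ω : Type*) : Semigroup (PT Ω) where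
  mul_assoc f g h := by
    funext x
    change ((f x).bind g).bind h = (f x).bind fun a => (g a).bind h
    cases f x <;> rfl

/-- The partial transformation `a` on `{1,…,n+1}` (0-indexed as `Fin (n+1)`):
`a(i) = i+1` for `1 ≤ i ≤ n−1`, `a(n) = 1`, undefined at `n+1`. -/
def aPT (n : ℕ) : PT (Fin (n + 1)) := fun x =>
  if h : x.val + 1 < n then some ⟨x.val + 1, by omega⟩
  else if x.val + 1 = n then some ⟨0, by omega⟩
  else none

/-- The partial transformation `b` on `{1,…,n+1}`:
`b(n+1) = 1`, `b(i) = i+1` for `1 ≤ i ≤ n−1`, undefined at `n`. -/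
def bPT (n : ℕ) : PT (Fin (n + 1)) := fun x =>
  if x.val = n then some ⟨0, by omega⟩
  else if h : x.val + 1 < n then some ⟨x.val + 1, by omega⟩
  else none

/-- `e_{i,j}`: the partial transformation with domain `{i}` sending `i` to `j`. -/
def ePT (n : ℕ) (i j : Fin (n + 1)) : PT (Fin (n + 1)) :=
  fun x => if x = i then some j else none

/-- The subset `N = {1} ∪ ⟨a,b⟩ ∪ {e_{i,j}} ∪ {θ}` of the partial transformation
semigroup; the maps `e_{i,j}` together with the empty map form an ideal isomorphic to
`M⁰({1},n+1,n+1;I_{n+1})`. -/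
def Nset (n : ℕ) : Set (PT (Fin (n + 1))) :=
  {fun x => some x} ∪ ↑(Subsemigroup.closure {aPT n, bPT n}) ∪
    {f | ∃ i j, f = ePT n i j} ∪ {fun _ => none}

/-!
Number the points `1, …, n` by `ZMod n` and give the extra point `n + 1` the number of `n`.
Every element of `⟨a, b⟩` then adds a constant `L` to the number of each point of its domain,
and its domain never contains both `n` and `n + 1`. The elements of `N` outside `{1} ∪ ⟨a, b⟩`
are the maps with at most one point in their domain, an ideal.

Let `n` be odd. If the Mal'cev sequence meets the ideal, then from there on `λ, ρ` are matrix
units `e_{i,c}, e_{j,e}` or `θ`; if they survive two more steps, two elements of `N` send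
`c, e` to `j, i` and to `i, j` respectively, which forces `i = j` because `2` is invertible
modulo `n`, then `c = e` by injectivity, so that `λ = ρ` already. Otherwise `λ_m, ρ_m` have a
common shift `L` and shrinking domains, which stabilise within `2n + 3` steps. Stability says that the domain of `λ_m` translated by
`d = L + ℓ` lies in that of `ρ_m` and vice versa; as `2` is invertible modulo `n` the two
domains agree on the cycle and cannot contain `n + 1`, hence `λ_m = ρ_m`.

For `n = 2h`, the map `a^h` swaps `1` and `h + 1`, and `x = e_{1,1}`, `y = e_{h+1,h+1}` with
`z = a^h, 1, a^h, 1, …` make `(λ_m, ρ_m)` alternate between two pairs of distinct elements.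
-/

namespace PT

variable {Ω : Type*}

instance : MonoidWithZero (PT Ω) where
  one := fun x => some x
  zero := fun _ => none
  one_mul _ := rfl
  mul_one f := funext fun x => by change (f x).bind some = f x; cases f x <;> rfl
  zero_mul _ := rfl
  mul_zero f := funext fun x => by change (f x).bind (fun _ => none) = none; cases f x <;> rfl

theorem one_apply (x : Ω) : (1 : PT Ω) x = some x := rfl

theorem zero_apply (x : Ω) : (0 : PT Ω) x = none := rfl

variable {f g : PT Ω} {x y : Ω}

theorem mul_apply_of_eq_some (h : f x = some y) (g : PT Ω) : (f * g) x = g y := by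
  change (f x).bind g = g y
  rw [h]; rfl

theorem mul_apply_of_eq_none (h : f x = none) (g : PT Ω) : (f * g) x = none := by
  change (f x).bind g = none
  rw [h]; rfl

theorem exists_of_mul_apply_eq_some {z : Ω} (h : (f * g) x = some z) :
    ∃ y, f x = some y ∧ g y = some z := by
  cases hx : f x with
  | none => rw [mul_apply_of_eq_none hx] at h; cases h
  | some y => exact ⟨y, rfl, by rwa [mul_apply_of_eq_some hx] at h⟩

def dom (f : PT Ω) : Set Ω := {x | f x ≠ none}

theorem mem_dom : x ∈ f.dom ↔ f x ≠ none := Iff.rfl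

theorem mem_dom_of_eq_some (h : f x = some y) : x ∈ f.dom := by simp [mem_dom, h]

theorem exists_of_mem_dom_mul (h : x ∈ (f * g).dom) : ∃ y, f x = some y ∧ y ∈ g.dom := by
  obtain ⟨z, hz⟩ := Option.ne_none_iff_exists'.mp h
  obtain ⟨y, hy, hyz⟩ := exists_of_mul_apply_eq_some hz
  exact ⟨y, hy, mem_dom_of_eq_some hyz⟩

theorem dom_mul_subset (f g : PT Ω) : (f * g).dom ⊆ f.dom := fun _ hx =>
  let ⟨_, hy, _⟩ := exists_of_mem_dom_mul hx
  mem_dom_of_eq_some hy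

def Injective (f : PT Ω) : Prop := ∀ ⦃x y z⦄, f x = some z → f y = some z → x = y

theorem injective_of_subsingleton_dom (hf : f.dom.Subsingleton) : f.Injective :=
  fun _ _ _ hx hy => hf (mem_dom_of_eq_some hx) (mem_dom_of_eq_some hy)

theorem Injective.subsingleton_dom_mul (hf : f.Injective) (hg : g.dom.Subsingleton) :
    (f * g).dom.Subsingleton := by
  intro x hx y hy
  obtain ⟨u, hxu, hu⟩ := exists_of_mem_dom_mul hx
  obtain ⟨v, hyv, hv⟩ := exists_of_mem_dom_mul hy
  obtain rfl : u = v := hg hu hv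
  exact hf hxu hyv

end PT

section Malcev

variable {M : Type*}

theorem lr_succ [Mul M] (x y : M) (z : ℕ → M) (m : ℕ) :
    lr x y z (m + 1) =
      ((lr x y z m).1 * z m * (lr x y z m).2, (lr x y z m).2 * z m * (lr x y z m).1) := rfl

theorem lr_eq_of_le [Mul M] {x y : M} {z : ℕ → M} {s k : ℕ}
    (h : (lr x y z s).1 = (lr x y z s).2) (hsk : s ≤ k) : (lr x y z k).1 = (lr x y z k).2 := by
  induction k, hsk using Nat.le_induction with
  | base => exact h
  | succ k _ ih => simp only [lr_succ, ih]

theorem lr_add [Mul M] (x y : M) (z : ℕ → M) (s k : ℕ) :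
    lr x y z (s + k) = lr (lr x y z s).1 (lr x y z s).2 (fun i => z (s + i)) k := by
  induction k with
  | zero => rfl
  | succ k ih => rw [← add_assoc, lr_succ, ih, lr_succ]

theorem lr_eq_of_eq_zero [SemigroupWithZero M] {x y : M} {z : ℕ → M} {s k : ℕ}
    (h : (lr x y z s).1 = 0 ∨ (lr x y z s).2 = 0) (hsk : s < k) :
    (lr x y z k).1 = (lr x y z k).2 := by
  refine lr_eq_of_le ?_ hsk
  rcases h with h | h <;> simp [lr_succ, h]

theorem lr_mem [Mul M] (S : Subsemigroup M) {x y : M} {z : ℕ → M} (hx : x ∈ S) (hy : y ∈ S)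
    (hz : ∀ k, z k ∈ S) (m : ℕ) : (lr x y z m).1 ∈ S ∧ (lr x y z m).2 ∈ S := by
  induction m with
  | zero => exact ⟨hx, hy⟩
  | succ m ih =>
    exact ⟨mul_mem (mul_mem ih.1 (hz m)) ih.2, mul_mem (mul_mem ih.2 (hz m)) ih.1⟩

theorem map_lr {N F : Type*} [Mul M] [Mul N] [FunLike F M N] [MulHomClass F M N] (f : F)
    (x y : M) (z : ℕ → M) (m : ℕ) :
    Prod.map f f (lr x y z m) = lr (f x) (f y) (fun k => f (z k)) m := by
  induction m with
  | zero => rfl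
  | succ m ih =>
    rw [lr_succ, lr_succ, ← ih]
    simp only [Prod.map, map_mul]

theorem lr_of_alternating [Mul M] {x y x' y' u v : M} (hx : x * u * y = x')
    (hy : y * u * x = y') (hx' : x' * v * y' = x) (hy' : y' * v * x' = y) (m : ℕ) :
    lr x y (fun k => if Even k then u else v) m = if Even m then (x, y) else (x', y') := by
  induction m with
  | zero => simp [lr]
  | succ m ih =>
    by_cases hm : Even m <;> simp [lr_succ, ih, hm, Nat.even_add_one, hx, hy, hx', hy']

theorem exists_lr_eq_coe [Semigroup M] (x y : M) (z : ℕ → WithOne M) (m : ℕ) :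
    ∃ p q : M, lr (x : WithOne M) y z m = (↑p, ↑q) := by
  have sandwich : ∀ (p q : M) (u : WithOne M), ∃ r : M, (p : WithOne M) * u * q = r := by
    intro p q u
    induction u using WithOne.cases_on
    · exact ⟨p * q, by simp⟩
    · intro a
      exact ⟨p * a * q, by simp⟩
  induction m with
  | zero => exact ⟨x, y, rfl⟩
  | succ m ih =>
    obtain ⟨p, q, h⟩ := ih
    obtain ⟨r, hr⟩ := sandwich p q (z m)
    obtain ⟨r', hr'⟩ := sandwich q p (z m)
    exact ⟨r, r', by rw [lr_succ, h, hr, hr']⟩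

theorem malcevNilpotent_iff [Monoid M] (S : Subsemigroup M) :
    MalcevNilpotent S ↔ ∃ m, 1 ≤ m ∧ ∀ x ∈ S, ∀ y ∈ S, ∀ z : ℕ → M, (∀ k, z k = 1 ∨ z k ∈ S) →
      (lr x y z m).1 = (lr x y z m).2 := by
  let φ : WithOne S →* M := WithOne.lift (MulMemClass.subtype S)
  have hφ : ∀ s : S, φ s = s := fun _ => rfl
  constructor
  · rintro ⟨m, hm, h⟩
    refine ⟨m, hm, fun x hx y hy z hz => ?_⟩
    classical
    let z' : ℕ → WithOne S := fun k => if h : z k ∈ S then ((⟨z k, h⟩ : S) : WithOne S) else 1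
    have hz' : (fun k => φ (z' k)) = z := by
      funext k
      by_cases hk : z k ∈ S
      · simp [z', hk, hφ]
      · simp only [z', dif_neg hk, map_one, (hz k).resolve_right hk]
    have key := map_lr φ ((⟨x, hx⟩ : S) : WithOne S) ((⟨y, hy⟩ : S) : WithOne S) z' m
    rw [hz', hφ, hφ, Prod.ext_iff] at key
    rw [← key.1, ← key.2]
    exact congrArg φ (h ⟨x, hx⟩ ⟨y, hy⟩ z')
  · rintro ⟨m, hm, h⟩
    refine ⟨m, hm, fun x y z => ?_⟩
    obtain ⟨p, q, hpq⟩ := exists_lr_eq_coe x y z m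
    have hz : ∀ k, φ (z k) = 1 ∨ φ (z k) ∈ S := fun k => by
      induction z k using WithOne.cases_on
      · exact Or.inl (map_one φ)
      · exact fun a => Or.inr (SetLike.coe_mem a)
    have key := map_lr φ (x : WithOne S) y z m
    rw [hφ, hφ, hpq] at key
    have hpq' : (p : M) = q := by
      have := h x x.2 y y.2 _ hz
      rwa [← key] at this
    rw [hpq, Subtype.ext hpq']

end Malcev

section Cycle

/- The points `0, …, n - 1` of `Fin (n + 1)` form the cycle of `a`, indexed by `ZMod n` through
`pt`; `pos` reads the index back and gives the extra point `Fin.last n` the index `-1` of the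
point `n - 1`, whose role it plays for `b`. -/

variable {n : ℕ}

def pos (p : Fin (n + 1)) : ZMod n := if p = Fin.last n then -1 else p.val

@[simp]
theorem pos_last : pos (Fin.last n) = -1 := if_pos rfl

theorem aPT_last : aPT n (Fin.last n) = none := by
  simp [aPT]

variable [NeZero n]

def pt (k : ZMod n) : Fin (n + 1) := ⟨k.val, Nat.lt_succ_of_lt (ZMod.val_lt k)⟩

@[simp]
theorem val_pt (k : ZMod n) : (pt k).val = k.val := rfl

theorem pt_ne_last (k : ZMod n) : pt k ≠ Fin.last n := fun h =>
  (ZMod.val_lt k).ne (congrArg Fin.val h)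

@[simp]
theorem pos_pt (k : ZMod n) : pos (pt k) = k := by
  rw [pos, if_neg (pt_ne_last k), val_pt, ZMod.natCast_zmod_val]

theorem pt_injective : Function.Injective (pt : ZMod n → Fin (n + 1)) :=
  Function.LeftInverse.injective pos_pt

theorem pt_pos {p : Fin (n + 1)} (hp : p ≠ Fin.last n) : pt (pos p) = p := by
  ext
  rw [pos, if_neg hp, val_pt, ZMod.val_natCast, Nat.mod_eq_of_lt (Fin.val_lt_last hp)]

theorem eq_last_or_eq_pt (p : Fin (n + 1)) : p = Fin.last n ∨ p = pt (pos p) := by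
  by_cases hp : p = Fin.last n
  · exact Or.inl hp
  · exact Or.inr (pt_pos hp).symm

theorem val_add_one (k : ZMod n) : (k + 1).val = (k.val + 1) % n := by
  conv_lhs => rw [← ZMod.natCast_zmod_val k]
  rw [← Nat.cast_add_one]
  exact ZMod.val_natCast n _

theorem val_neg_one_add_one : (-1 : ZMod n).val + 1 = n := by
  have h := val_add_one (-1 : ZMod n)
  rw [neg_add_cancel, ZMod.val_zero] at h
  have hlt := ZMod.val_lt (-1 : ZMod n)
  by_contra hne
  rw [Nat.mod_eq_of_lt (by omega)] at h
  omega

theorem injOn_pos {s : Set (Fin (n + 1))} (h : Fin.last n ∉ s ∨ pt (-1) ∉ s) :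
    Set.InjOn pos s := by
  have key : ∀ ⦃p q⦄, p ∈ s → q ∈ s → p = Fin.last n → pos p = pos q → p = q := by
    intro p q hp hq hpl hpq
    rcases eq_last_or_eq_pt q with hql | hql
    · rw [hpl, hql]
    · rw [hpl, pos_last] at hpq
      rw [← hpq] at hql
      subst hpl hql
      tauto
  intro p hp q hq hpq
  rcases eq_last_or_eq_pt p with hpl | hpl
  · exact key hp hq hpl hpq
  rcases eq_last_or_eq_pt q with hql | hql
  · exact (key hq hp hql hpq.symm).symm
  rw [hpl, hql, hpq]

theorem aPT_pt (k : ZMod n) : aPT n (pt k) = some (pt (k + 1)) := by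
  have hv := val_add_one k
  have hk := ZMod.val_lt k
  unfold aPT
  split_ifs with h₁ h₂
  · rw [Nat.mod_eq_of_lt (show k.val + 1 < n from h₁)] at hv
    exact congrArg some (Fin.ext hv.symm)
  · rw [show k.val + 1 = n from h₂, Nat.mod_self] at hv
    exact congrArg some (Fin.ext hv.symm)
  · exact absurd (show k.val + 1 ≤ n from hk) (by simp only [val_pt] at h₁ h₂; omega)

theorem bPT_last : bPT n (Fin.last n) = some (pt 0) := by
  simp [bPT, pt]

theorem bPT_pt_neg_one : bPT n (pt (-1)) = none := by
  have h := val_neg_one_add_one (n := n)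
  unfold bPT
  split_ifs with h₁ h₂ <;> simp only [val_pt] at * <;> omega

theorem bPT_apply_eq_some {p q : Fin (n + 1)} (h : bPT n p = some q) : q = pt (pos p + 1) := by
  rcases eq_last_or_eq_pt p with rfl | hp
  · rw [bPT_last] at h
    simp_all
  rw [hp] at h ⊢
  set k := pos p
  have hv := val_add_one k
  have hk := ZMod.val_lt k
  unfold bPT at h
  split_ifs at h with h₁ h₂
  · exact absurd h₁ hk.ne
  · cases h
    rw [Nat.mod_eq_of_lt (show k.val + 1 < n from h₂)] at hv
    rw [pos_pt]
    exact Fin.ext hv.symm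

end Cycle

section Shift

variable {n : ℕ} [NeZero n]

structure IsShift (L : ZMod n) (w : PT (Fin (n + 1))) : Prop where
  apply_eq : ∀ ⦃p q⦄, w p = some q → q = pt (pos p + L)
  injOn_pos : Set.InjOn pos w.dom

def IsShiftOrOne (L : ZMod n) (w : PT (Fin (n + 1))) : Prop := w = 1 ∧ L = 0 ∨ IsShift L w

theorem isShift_aPT : IsShift 1 (aPT n) where
  apply_eq p q h := by
    rcases eq_last_or_eq_pt p with rfl | hp
    · rw [aPT_last] at h
      cases h
    · rw [hp, aPT_pt, Option.some_inj] at h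
      rw [← h, hp, pos_pt]
  injOn_pos := injOn_pos (Or.inl fun h => h aPT_last)

theorem isShift_bPT : IsShift 1 (bPT n) where
  apply_eq _ _ := bPT_apply_eq_some
  injOn_pos := injOn_pos (Or.inr fun h => h bPT_pt_neg_one)

variable {L L' : ZMod n} {u v w : PT (Fin (n + 1))}

namespace IsShift

theorem pos_apply (hw : IsShift L w) {p q : Fin (n + 1)} (h : w p = some q) :
    pos q = pos p + L := by
  rw [hw.apply_eq h, pos_pt]

theorem mul (hu : IsShift L u) (hv : IsShift L' v) : IsShift (L + L') (u * v) where
  apply_eq p q h := by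
    obtain ⟨r, hr, hrq⟩ := PT.exists_of_mul_apply_eq_some h
    rw [hv.apply_eq hrq, hu.pos_apply hr, add_assoc]
  injOn_pos := hu.injOn_pos.mono (PT.dom_mul_subset u v)

theorem injective (hw : IsShift L w) : w.Injective := by
  intro p q r hp hq
  refine hw.injOn_pos (PT.mem_dom_of_eq_some hp) (PT.mem_dom_of_eq_some hq) ?_
  exact add_right_cancel (pt_injective ((hw.apply_eq hp).symm.trans (hw.apply_eq hq)))

theorem ext_of_dom_eq (hu : IsShift L u) (hv : IsShift L v) (h : u.dom = v.dom) : u = v := by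
  funext p
  cases hup : u p with
  | none =>
    by_contra hvp
    exact (Set.ext_iff.mp h p).mpr (Ne.symm hvp) hup
  | some q =>
    obtain ⟨r, hvr⟩ := Option.ne_none_iff_exists'.mp
      ((Set.ext_iff.mp h p).mp (PT.mem_dom_of_eq_some hup))
    rw [hvr, hu.apply_eq hup, hv.apply_eq hvr]

theorem mul_isShiftOrOne (hu : IsShift L u) (hv : IsShiftOrOne L' v) :
    IsShift (L + L') (u * v) := by
  rcases hv with ⟨rfl, rfl⟩ | hv
  · simpa using hu
  · exact hu.mul hv

end IsShift

namespace IsShiftOrOne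

theorem one : IsShiftOrOne 0 (1 : PT (Fin (n + 1))) := Or.inl ⟨rfl, rfl⟩

theorem mul_isShift (hu : IsShiftOrOne L u) (hv : IsShift L' v) : IsShift (L + L') (u * v) := by
  rcases hu with ⟨rfl, rfl⟩ | hu
  · simpa using hv
  · exact hu.mul hv

theorem mul (hu : IsShiftOrOne L u) (hv : IsShiftOrOne L' v) : IsShiftOrOne (L + L') (u * v) := by
  rcases hu with ⟨rfl, rfl⟩ | hu
  · simpa using hv
  · exact Or.inr (hu.mul_isShiftOrOne hv)

theorem pos_apply (hw : IsShiftOrOne L w) {p q : Fin (n + 1)} (h : w p = some q) :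
    pos q = pos p + L := by
  rcases hw with ⟨rfl, rfl⟩ | hw
  · cases h
    simp
  · exact hw.pos_apply h

theorem apply_pt (hw : IsShiftOrOne L w) {k : ZMod n} {q : Fin (n + 1)}
    (h : w (pt k) = some q) : q = pt (k + L) := by
  rcases hw with ⟨rfl, rfl⟩ | hw
  · cases h
    simp
  · rw [hw.apply_eq h, pos_pt]

theorem injective (hw : IsShiftOrOne L w) : w.Injective := by
  rcases hw with ⟨rfl, rfl⟩ | hw
  · intro p q r hp hq
    exact Option.some_injective _ (hp.trans hq.symm)
  · exact hw.injective

end IsShiftOrOne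

theorem exists_isShift_of_mem_closure (hw : w ∈ Subsemigroup.closure {aPT n, bPT n}) :
    ∃ L, IsShift L w := by
  induction hw using Subsemigroup.closure_induction with
  | mem w hw =>
    rcases hw with rfl | rfl
    exacts [⟨1, isShift_aPT⟩, ⟨1, isShift_bPT⟩]
  | mul u v _ _ hu hv =>
    obtain ⟨L, hu⟩ := hu
    obtain ⟨L', hv⟩ := hv
    exact ⟨L + L', hu.mul hv⟩

end Shift

section Ideal

variable {n : ℕ}

theorem dom_ePT (i j : Fin (n + 1)) : (ePT n i j).dom = {i} := by
  ext p
  simp [PT.mem_dom, ePT]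

theorem subsingleton_dom_iff {f : PT (Fin (n + 1))} :
    f.dom.Subsingleton ↔ (∃ i j, f = ePT n i j) ∨ f = 0 := by
  constructor
  · intro hf
    rcases f.dom.eq_empty_or_nonempty with h | ⟨i, hi⟩
    · refine Or.inr (funext fun p => ?_)
      by_contra hp
      exact h.subset hp
    · obtain ⟨j, hj⟩ := Option.ne_none_iff_exists'.mp hi
      refine Or.inl ⟨i, j, funext fun p => ?_⟩
      by_cases hp : p = i
      · simp [ePT, hp, hj]
      · rw [ePT, if_neg hp]
        by_contra hfp
        exact hp (hf hfp hi)
  · rintro (⟨i, j, rfl⟩ | rfl)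
    · rw [dom_ePT]
      exact Set.subsingleton_singleton
    · intro p hp
      exact absurd rfl hp

theorem ePT_mul_mul_ePT (i c j e : Fin (n + 1)) (z : PT (Fin (n + 1))) :
    ePT n i c * z * ePT n j e = if z c = some j then ePT n i e else 0 := by
  funext p
  by_cases hp : p = i
  · have h₁ : (ePT n i c * z) p = z c := PT.mul_apply_of_eq_some (by simp [ePT, hp]) z
    cases hz : z c with
    | none => simp [PT.mul_apply_of_eq_none (h₁.trans hz), PT.zero_apply]
    | some t =>
      rw [PT.mul_apply_of_eq_some (h₁.trans hz)]
      by_cases ht : t = j <;> simp [ht, ePT, hp, PT.zero_apply]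
  · have h₁ : (ePT n i c * z) p = none := PT.mul_apply_of_eq_none (by simp [ePT, hp]) z
    rw [PT.mul_apply_of_eq_none h₁]
    split_ifs <;> simp [ePT, hp, PT.zero_apply]

theorem ePT_mul_ePT (i c j e : Fin (n + 1)) :
    ePT n i c * ePT n j e = if c = j then ePT n i e else 0 := by
  simpa [PT.one_apply] using ePT_mul_mul_ePT i c j e 1

theorem ePT_ne_ePT {i j : Fin (n + 1)} (h : i ≠ j) (c e : Fin (n + 1)) : ePT n i c ≠ ePT n j e :=
  fun he => by simpa [ePT, h] using congrFun he i

theorem mem_Nset_iff {f : PT (Fin (n + 1))} :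
    f ∈ Nset n ↔ f = 1 ∨ f ∈ Subsemigroup.closure {aPT n, bPT n} ∨ f.dom.Subsingleton := by
  rw [subsingleton_dom_iff]
  change ((f = 1 ∨ f ∈ Subsemigroup.closure {aPT n, bPT n}) ∨ ∃ i j, f = ePT n i j) ∨ f = 0 ↔ _
  simp only [or_assoc]

theorem one_mem_Nset : (1 : PT (Fin (n + 1))) ∈ Nset n := mem_Nset_iff.mpr (Or.inl rfl)

variable [NeZero n] {f g : PT (Fin (n + 1))}

theorem isShiftOrOne_or_subsingleton_dom (hf : f ∈ Nset n) :
    (∃ L, IsShiftOrOne L f) ∨ f.dom.Subsingleton := by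
  rcases mem_Nset_iff.mp hf with rfl | hf | hf
  · exact Or.inl ⟨0, IsShiftOrOne.one⟩
  · obtain ⟨L, hL⟩ := exists_isShift_of_mem_closure hf
    exact Or.inl ⟨L, Or.inr hL⟩
  · exact Or.inr hf

theorem injective_of_mem_Nset (hf : f ∈ Nset n) : f.Injective := by
  rcases isShiftOrOne_or_subsingleton_dom hf with ⟨L, hL⟩ | hf
  · exact hL.injective
  · exact PT.injective_of_subsingleton_dom hf

theorem mul_mem_Nset (hf : f ∈ Nset n) (hg : g ∈ Nset n) : f * g ∈ Nset n := by
  by_cases hfs : f.dom.Subsingleton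
  · exact mem_Nset_iff.mpr (Or.inr (Or.inr (hfs.anti (PT.dom_mul_subset f g))))
  by_cases hgs : g.dom.Subsingleton
  · exact mem_Nset_iff.mpr (Or.inr (Or.inr ((injective_of_mem_Nset hf).subsingleton_dom_mul hgs)))
  rcases mem_Nset_iff.mp hf with rfl | hf | hf
  · rwa [one_mul]
  · rcases mem_Nset_iff.mp hg with rfl | hg | hg
    · rw [mul_one]
      exact mem_Nset_iff.mpr (Or.inr (Or.inl hf))
    · exact mem_Nset_iff.mpr (Or.inr (Or.inl (mul_mem hf hg)))
    · exact absurd hg hgs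
  · exact absurd hf hfs

def Nsubsemigroup (n : ℕ) [NeZero n] : Subsemigroup (PT (Fin (n + 1))) where
  carrier := Nset n
  mul_mem' := mul_mem_Nset

theorem closure_Nset : Subsemigroup.closure (Nset n) = Nsubsemigroup n :=
  Subsemigroup.closure_eq (Nsubsemigroup n)

theorem subsingleton_dom_mul_mul {u v w : PT (Fin (n + 1))} (hu : u ∈ Nset n) (hv : v ∈ Nset n)
    (h : u.dom.Subsingleton ∨ v.dom.Subsingleton ∨ w.dom.Subsingleton) :
    (u * v * w).dom.Subsingleton := by
  have huv : (u * v).dom.Subsingleton ∨ w.dom.Subsingleton := by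
    rcases h with h | h | h
    · exact Or.inl (h.anti (PT.dom_mul_subset u v))
    · exact Or.inl ((injective_of_mem_Nset hu).subsingleton_dom_mul h)
    · exact Or.inr h
  rcases huv with h | h
  · exact h.anti (PT.dom_mul_subset _ w)
  · exact (injective_of_mem_Nset (mul_mem_Nset hu hv)).subsingleton_dom_mul h

end Ideal

theorem exists_succ_eq_of_antitone {f : ℕ → ℕ} (hf : Antitone f) : ∃ m ≤ f 0, f (m + 1) = f m := by
  by_contra! h
  have key : ∀ m ≤ f 0 + 1, f m + m ≤ f 0 := by
    intro m hm
    induction m with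
    | zero => simp
    | succ m ih =>
      have h₁ : f (m + 1) < f m := lt_of_le_of_ne (hf m.le_succ) (h m (by omega))
      have h₂ := ih (by omega)
      omega
  have := key (f 0 + 1) le_rfl
  omega

theorem PT.exists_lr_dom_stable {Ω : Type*} [Finite Ω] (x y : PT Ω) (z : ℕ → PT Ω) :
    ∃ m, 1 ≤ m ∧ m ≤ 2 * Nat.card Ω + 1 ∧
      (lr x y z m).1.dom ⊆ (lr x y z (m + 1)).1.dom ∧
      (lr x y z m).2.dom ⊆ (lr x y z (m + 1)).2.dom := by
  have hD : ∀ m, (lr x y z (m + 1)).1.dom ⊆ (lr x y z m).1.dom := fun m =>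
    (PT.dom_mul_subset _ _).trans (PT.dom_mul_subset _ _)
  have hE : ∀ m, (lr x y z (m + 1)).2.dom ⊆ (lr x y z m).2.dom := fun m =>
    (PT.dom_mul_subset _ _).trans (PT.dom_mul_subset _ _)
  let f i := (lr x y z (i + 1)).1.dom.ncard + (lr x y z (i + 1)).2.dom.ncard
  have hf : Antitone f := antitone_nat_of_succ_le fun i =>
    add_le_add (Set.ncard_le_ncard (hD _)) (Set.ncard_le_ncard (hE _))
  obtain ⟨i, hi, hfi⟩ := exists_succ_eq_of_antitone hf
  simp only [f, zero_add] at hi hfi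
  have h₁ := Set.ncard_le_card (lr x y z 1).1.dom
  have h₂ := Set.ncard_le_card (lr x y z 1).2.dom
  have hD' := Set.ncard_le_ncard (hD (i + 1))
  have hE' := Set.ncard_le_ncard (hE (i + 1))
  refine ⟨i + 1, by omega, by omega, ?_, ?_⟩
  · exact (Set.eq_of_subset_of_ncard_le (hD (i + 1)) (by omega)).symm.subset
  · exact (Set.eq_of_subset_of_ncard_le (hE (i + 1)) (by omega)).symm.subset

theorem apply_sub_of_alternating {R : Type*} [CommRing R] {P Q : R → Prop} {d : R} {m : ℕ}
    (hm : 2 * (m : R) = -1) (hPQ : ∀ k, P k → Q (k + d)) (hQP : ∀ k, Q k → P (k + d))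
    {k : R} (hk : P k) : P (k - d) := by
  have iter : ∀ j : ℕ, P (k + 2 * d * j) := by
    intro j
    induction j with
    | zero => simpa using hk
    | succ j ih =>
      have := hQP _ (hPQ _ ih)
      convert this using 1
      push_cast
      ring
  convert iter m using 1
  linear_combination (-d) * hm

theorem exists_two_mul_natCast_eq_neg_one_of_odd {n : ℕ} (h : Odd n) :
    ∃ m : ℕ, 2 * (m : ZMod n) = -1 := by
  obtain ⟨m, rfl⟩ := h
  refine ⟨m, ?_⟩
  have := ZMod.natCast_self (2 * m + 1)
  push_cast at this
  linear_combination this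

section OddCase

variable {n : ℕ} [NeZero n] {L ℓ : ZMod n} {u v z : PT (Fin (n + 1))}

theorem IsShift.pt_mem_dom_of_dom_subset (hu : IsShift L u) (hz : IsShiftOrOne ℓ z)
    (h : u.dom ⊆ (u * z * v).dom) {p : Fin (n + 1)} (hp : p ∈ u.dom) :
    pt (pos p + (L + ℓ)) ∈ v.dom := by
  obtain ⟨r, hur, hr⟩ := PT.exists_of_mem_dom_mul (h hp)
  obtain ⟨s, hus, hsr⟩ := PT.exists_of_mul_apply_eq_some hur
  rw [hu.apply_eq hus] at hsr
  rwa [hz.apply_pt hsr, add_assoc] at hr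

theorem IsShift.cycle_dom_subset_and_last_not_mem_dom (hodd : Odd n) (hu : IsShift L u)
    (hv : IsShift L v) (hz : IsShiftOrOne ℓ z) (huv : u.dom ⊆ (u * z * v).dom)
    (hvu : v.dom ⊆ (v * z * u).dom) :
    (∀ k, pt k ∈ u.dom → pt k ∈ v.dom) ∧ Fin.last n ∉ u.dom := by
  obtain ⟨m, hm⟩ := exists_two_mul_natCast_eq_neg_one_of_odd hodd
  have hPQ : ∀ k, pt k ∈ u.dom → pt (k + (L + ℓ)) ∈ v.dom := fun k hk => by
    simpa using hu.pt_mem_dom_of_dom_subset hz huv hk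
  have hQP : ∀ k, pt k ∈ v.dom → pt (k + (L + ℓ)) ∈ u.dom := fun k hk => by
    simpa using hv.pt_mem_dom_of_dom_subset hz hvu hk
  have back : ∀ k, pt k ∈ u.dom → pt (k - (L + ℓ)) ∈ u.dom := fun k hk =>
    apply_sub_of_alternating (P := fun k => pt k ∈ u.dom) hm hPQ hQP hk
  refine ⟨fun k hk => by simpa using hPQ _ (back k hk), fun hlast => ?_⟩
  -- `Fin.last n` and `pt (-1)` have the same position, so they are never both in a domain
  have h := hQP _ (by simpa using hu.pt_mem_dom_of_dom_subset hz huv hlast)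
  have h' : pt (-1) ∈ u.dom := by simpa using back _ (back _ h)
  exact pt_ne_last (-1) (hu.injOn_pos h' hlast (by simp))

theorem IsShift.eq_of_dom_subset (hodd : Odd n) (hu : IsShift L u) (hv : IsShift L v)
    (hz : IsShiftOrOne ℓ z) (huv : u.dom ⊆ (u * z * v).dom) (hvu : v.dom ⊆ (v * z * u).dom) :
    u = v := by
  obtain ⟨huv', hu'⟩ := hu.cycle_dom_subset_and_last_not_mem_dom hodd hv hz huv hvu
  obtain ⟨hvu', hv'⟩ := hv.cycle_dom_subset_and_last_not_mem_dom hodd hu hz hvu huv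
  refine hu.ext_of_dom_eq hv (Set.ext fun p => ?_)
  rcases eq_last_or_eq_pt p with rfl | hp
  · exact iff_of_false hu' hv'
  · rw [hp]
    exact ⟨huv' _, hvu' _⟩

variable {X Y : PT (Fin (n + 1))} {Z : ℕ → PT (Fin (n + 1))}

theorem exists_isShift_lr {LX LY : ZMod n} (hX : IsShiftOrOne LX X) (hY : IsShiftOrOne LY Y)
    (hXY : IsShift LX X ∨ IsShift LY Y) {m : ℕ} (hm : 1 ≤ m)
    (hZ : ∀ k < m, ∃ ℓ, IsShiftOrOne ℓ (Z k)) :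
    ∃ L, IsShift L (lr X Y Z m).1 ∧ IsShift L (lr X Y Z m).2 := by
  induction m, hm using Nat.le_induction with
  | base =>
    obtain ⟨ℓ, hℓ⟩ := hZ 0 one_pos
    have hcomm : LY + ℓ + LX = LX + ℓ + LY := by ring
    rcases hXY with hX' | hY'
    · exact ⟨_, (hX'.mul_isShiftOrOne hℓ).mul_isShiftOrOne hY,
        hcomm ▸ (hY.mul hℓ).mul_isShift hX'⟩
    · exact ⟨_, (hX.mul hℓ).mul_isShift hY',
        hcomm ▸ (hY'.mul_isShiftOrOne hℓ).mul_isShiftOrOne hX⟩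
  | succ m hm ih =>
    obtain ⟨L, h₁, h₂⟩ := ih fun k hk => hZ k (by omega)
    obtain ⟨ℓ, hℓ⟩ := hZ m (by omega)
    exact ⟨L + ℓ + L, (h₁.mul_isShiftOrOne hℓ).mul h₂, (h₂.mul_isShiftOrOne hℓ).mul h₁⟩

theorem exists_lr_eq_of_isShiftOrOne (hodd : Odd n) {LX LY : ZMod n} (hX : IsShiftOrOne LX X)
    (hY : IsShiftOrOne LY Y) (hZ : ∀ k ≤ 2 * n + 3, ∃ ℓ, IsShiftOrOne ℓ (Z k)) :
    ∃ m ≤ 2 * n + 3, (lr X Y Z m).1 = (lr X Y Z m).2 := by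
  by_cases hXY : X = Y
  · exact ⟨0, Nat.zero_le _, hXY⟩
  have hXY' : IsShift LX X ∨ IsShift LY Y := by
    rcases hX with ⟨rfl, -⟩ | hX
    · rcases hY with ⟨rfl, -⟩ | hY
      exacts [absurd rfl hXY, Or.inr hY]
    · exact Or.inl hX
  obtain ⟨m, hm₁, hm₂, hD, hE⟩ := PT.exists_lr_dom_stable X Y Z
  simp only [Nat.card_eq_fintype_card, Fintype.card_fin] at hm₂
  obtain ⟨L, hL₁, hL₂⟩ := exists_isShift_lr hX hY hXY' hm₁ fun k hk => hZ k (by omega)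
  obtain ⟨ℓ, hℓ⟩ := hZ m (by omega)
  exact ⟨m, by omega, hL₁.eq_of_dom_subset hodd hL₂ hℓ hD hE⟩

theorem eq_of_swap (hodd : Odd n) {z z' : PT (Fin (n + 1))} (hz : z ∈ Nset n) (hz' : z' ∈ Nset n)
    {c e i j : Fin (n + 1)} (h₁ : z c = some j) (h₂ : z e = some i) (h₃ : z' c = some i)
    (h₄ : z' e = some j) : i = j := by
  have key : ∀ {z z' : PT (Fin (n + 1))} {i j : Fin (n + 1)} {L L' : ZMod n}, IsShift L z →
      IsShiftOrOne L' z' → z c = some j → z e = some i → z' c = some i → z' e = some j →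
      i = j := by
    intro z z' i j L L' hz hz' h₁ h₂ h₃ h₄
    obtain ⟨m, hm⟩ := exists_two_mul_natCast_eq_neg_one_of_odd hodd
    have hj := hz.pos_apply h₁
    have hi := hz.pos_apply h₂
    have hi' := hz'.pos_apply h₃
    have hj' := hz'.pos_apply h₄
    have hce : pos c = pos e := by
      linear_combination (m : ZMod n) * (hj - hi - hj' + hi') + (pos c - pos e) * hm
    rw [hz.apply_eq h₁, hz.apply_eq h₂, hce]
  have of_eq : c = e → i = j := by
    rintro rfl
    exact Option.some_injective _ (h₂.symm.trans h₁)
  rcases isShiftOrOne_or_subsingleton_dom hz with ⟨L, hL | hL⟩ | hs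
  · obtain ⟨rfl, -⟩ := hL
    rcases isShiftOrOne_or_subsingleton_dom hz' with ⟨L', ⟨rfl, -⟩ | hL'⟩ | hs'
    · exact Option.some_injective _ (h₃.symm.trans h₁)
    · exact (key hL' IsShiftOrOne.one h₃ h₄ h₁ h₂).symm
    · exact of_eq (hs' (PT.mem_dom_of_eq_some h₃) (PT.mem_dom_of_eq_some h₄))
  · rcases isShiftOrOne_or_subsingleton_dom hz' with ⟨L', hL'⟩ | hs'
    · exact key hL hL' h₁ h₂ h₃ h₄
    · exact of_eq (hs' (PT.mem_dom_of_eq_some h₃) (PT.mem_dom_of_eq_some h₄))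
  · exact of_eq (hs (PT.mem_dom_of_eq_some h₁) (PT.mem_dom_of_eq_some h₂))

theorem lr_three_eq_of_subsingleton_dom (hodd : Odd n) (hX : X.dom.Subsingleton)
    (hY : Y.dom.Subsingleton) (hZ : ∀ k, Z k ∈ Nset n) : (lr X Y Z 3).1 = (lr X Y Z 3).2 := by
  rcases subsingleton_dom_iff.mp hX with ⟨i, c, rfl⟩ | rfl
  swap
  · exact lr_eq_of_eq_zero (s := 0) (Or.inl rfl) (by norm_num)
  rcases subsingleton_dom_iff.mp hY with ⟨j, e, rfl⟩ | rfl
  swap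
  · exact lr_eq_of_eq_zero (s := 0) (Or.inr rfl) (by norm_num)
  have h₁ : lr (ePT n i c) (ePT n j e) Z 1 =
      (if Z 0 c = some j then ePT n i e else 0, if Z 0 e = some i then ePT n j c else 0) := by
    simp [lr, ePT_mul_mul_ePT]
  by_cases hc : Z 0 c = some j
  swap
  · exact lr_eq_of_eq_zero (s := 1) (Or.inl (by simp [h₁, hc])) (by norm_num)
  by_cases he : Z 0 e = some i
  swap
  · exact lr_eq_of_eq_zero (s := 1) (Or.inr (by simp [h₁, he])) (by norm_num)
  have h₂ : lr (ePT n i c) (ePT n j e) Z 2 =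
      (if Z 1 e = some j then ePT n i c else 0, if Z 1 c = some i then ePT n j e else 0) := by
    rw [lr_succ, h₁]
    simp [hc, he, ePT_mul_mul_ePT]
  by_cases he' : Z 1 e = some j
  swap
  · exact lr_eq_of_eq_zero (s := 2) (Or.inl (by simp [h₂, he'])) (by norm_num)
  by_cases hc' : Z 1 c = some i
  swap
  · exact lr_eq_of_eq_zero (s := 2) (Or.inr (by simp [h₂, hc'])) (by norm_num)
  obtain rfl := eq_of_swap hodd (hZ 0) (hZ 1) hc he hc' he'
  obtain rfl := injective_of_mem_Nset (hZ 0) hc he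
  exact lr_eq_of_le (s := 0) rfl (by norm_num)

theorem lr_eq_of_odd (hodd : Odd n) (hX : X ∈ Nset n) (hY : Y ∈ Nset n)
    (hZ : ∀ k, Z k ∈ Nset n) : (lr X Y Z (2 * n + 7)).1 = (lr X Y Z (2 * n + 7)).2 := by
  have hmem := lr_mem (Nsubsemigroup n) hX hY hZ
  by_cases hI : ∃ k ≤ 2 * n + 3, (lr X Y Z k).1.dom.Subsingleton ∨ (Z k).dom.Subsingleton ∨
      (lr X Y Z k).2.dom.Subsingleton
  · obtain ⟨k, hk, h⟩ := hI
    have h₁ : (lr X Y Z (k + 1)).1.dom.Subsingleton := subsingleton_dom_mul_mul (hmem k).1 (hZ k) h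
    have h₂ : (lr X Y Z (k + 1)).2.dom.Subsingleton :=
      subsingleton_dom_mul_mul (hmem k).2 (hZ k) (by tauto)
    have h₃ := lr_three_eq_of_subsingleton_dom hodd h₁ h₂ fun i => hZ (k + 1 + i)
    rw [← lr_add] at h₃
    exact lr_eq_of_le h₃ (by omega)
  · have hT : ∀ {f}, f ∈ Nset n → ¬f.dom.Subsingleton → ∃ L, IsShiftOrOne L f := fun hf hs =>
      (isShiftOrOne_or_subsingleton_dom hf).resolve_right hs
    obtain ⟨LX, hLX⟩ := hT hX fun h => hI ⟨0, Nat.zero_le _, Or.inl h⟩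
    obtain ⟨LY, hLY⟩ := hT hY fun h => hI ⟨0, Nat.zero_le _, Or.inr (Or.inr h)⟩
    obtain ⟨m, hm, heq⟩ := exists_lr_eq_of_isShiftOrOne hodd hLX hLY fun k hk =>
      hT (hZ k) fun h => hI ⟨k, hk, Or.inr (Or.inl h)⟩
    exact lr_eq_of_le heq (by omega)

end OddCase

section EvenCase

variable {n : ℕ}

theorem aPT_pow_succ_mem_closure (j : ℕ) :
    aPT n ^ (j + 1) ∈ Subsemigroup.closure {aPT n, bPT n} := by
  have ha : aPT n ∈ Subsemigroup.closure {aPT n, bPT n} := Subsemigroup.subset_closure (by simp)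
  induction j with
  | zero => simpa using ha
  | succ j ih => exact pow_succ (aPT n) (j + 1) ▸ mul_mem ih ha

variable [NeZero n]

theorem aPT_pow_pt (j : ℕ) (k : ZMod n) : (aPT n ^ j) (pt k) = some (pt (k + (j : ZMod n))) := by
  induction j with
  | zero => simp [PT.one_apply]
  | succ j ih =>
    rw [pow_succ, PT.mul_apply_of_eq_some ih, aPT_pt]
    push_cast
    ring_nf

theorem exists_lr_ne_of_even (he : Even n) :
    ∃ x ∈ Nset n, ∃ y ∈ Nset n, ∃ z : ℕ → PT (Fin (n + 1)), (∀ k, z k ∈ Nset n) ∧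
      ∀ m, (lr x y z m).1 ≠ (lr x y z m).2 := by
  obtain ⟨h, hh⟩ := he
  have hpos : 0 < h := by
    have := NeZero.ne n
    omega
  have hw : aPT n ^ h ∈ Nset n := by
    obtain ⟨j, rfl⟩ : ∃ j, h = j + 1 := ⟨h - 1, by omega⟩
    exact mem_Nset_iff.mpr (Or.inr (Or.inl (aPT_pow_succ_mem_closure j)))
  have hw₀ : (aPT n ^ h) (pt 0) = some (pt h) := by rw [aPT_pow_pt, zero_add]
  have hwh : (aPT n ^ h) (pt h) = some (pt 0) := by
    rw [aPT_pow_pt, ← Nat.cast_add, ← hh, ZMod.natCast_self]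
  have hne : pt (0 : ZMod n) ≠ pt h := fun e => by
    have := Nat.le_of_dvd hpos ((ZMod.natCast_eq_zero_iff h n).mp (pt_injective e).symm)
    omega
  have hmem : ∀ i j : Fin (n + 1), ePT n i j ∈ Nset n := fun i j =>
    mem_Nset_iff.mpr (Or.inr (Or.inr (subsingleton_dom_iff.mpr (Or.inl ⟨i, j, rfl⟩))))
  refine ⟨ePT n (pt 0) (pt 0), hmem _ _, ePT n (pt h) (pt h), hmem _ _,
    fun k => if Even k then aPT n ^ h else 1, fun k => ?_, fun m => ?_⟩
  · beta_reduce
    split_ifs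
    exacts [hw, one_mem_Nset]
  rw [lr_of_alternating (x' := ePT n (pt 0) (pt h)) (y' := ePT n (pt h) (pt 0))]
  · split_ifs
    exacts [ePT_ne_ePT hne _ _, ePT_ne_ePT hne _ _]
  all_goals simp [ePT_mul_mul_ePT, ePT_mul_ePT, hw₀, hwh]

end EvenCase

/-- `N` is a subsemigroup of the partial transformation semigroup, and `N` is Mal'cev
nilpotent if and only if `n` is odd. -/
theorem stmt18 (n : ℕ) (hn : 1 ≤ n) :
    (∀ f ∈ Nset n, ∀ g ∈ Nset n, f * g ∈ Nset n) ∧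
      (MalcevNilpotent (Subsemigroup.closure (Nset n)) ↔ Odd n) := by
  have : NeZero n := ⟨by omega⟩
  refine ⟨fun f hf g hg => mul_mem_Nset hf hg, ?_⟩
  rw [closure_Nset, malcevNilpotent_iff]
  constructor
  · rintro ⟨m, -, h⟩
    by_contra hodd
    obtain ⟨x, hx, y, hy, z, hz, hne⟩ := exists_lr_ne_of_even (Nat.not_odd_iff_even.mp hodd)
    exact hne m (h x hx y hy z fun k => Or.inr (hz k))
  · intro hodd
    refine ⟨2 * n + 7, by omega, fun x hx y hy z hz => lr_eq_of_odd hodd hx hy fun k => ?_⟩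
    rcases hz k with h | h
    exacts [h ▸ one_mem_Nset, h]

end SMN
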